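/- The automorphism group of the affine Grassmann code C^A(ℓ,m) contains a subgroup of order q^{ℓℓ'}·∏_{i=0}^{ℓ'−1}(q^{ℓ'} − q^i), namely a subgroup isomorphic to M_{ℓ×ℓ'}(F_q) ⋊ GL_{ℓ'}(F_q). -/

import Mathlib

open MvPolynomial

/-- The minor of the generic `ℓ × ℓ'` matrix of indeterminates determined by the
rows `r` and columns `c`. -/
noncomputable def genMinor {F : Type*} [Field F] (ℓ ℓ' k : ℕ)
    (r : Fin k → Fin ℓ) (c : Fin k → Fin ℓ') : MvPolynomial (Fin ℓ × Fin ℓ') F :=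
  (Matrix.of fun i j => (X (r i, c j) : MvPolynomial (Fin ℓ × Fin ℓ') F)).det

/-- The set of all minors (of all orders `0 ≤ k ≤ ℓ`, the order-`0` minor being `1`)
of the generic `ℓ × ℓ'` matrix, as elements of the polynomial ring. -/
def minorSet (F : Type*) [Field F] (ℓ ℓ' : ℕ) : Set (MvPolynomial (Fin ℓ × Fin ℓ') F) :=
  {p | ∃ (k : ℕ) (r : Fin k → Fin ℓ) (c : Fin k → Fin ℓ'),
    StrictMono r ∧ StrictMono c ∧ p = genMinor ℓ ℓ' k r c}

/-- The evaluation map, sending a polynomial to the tuple of its values at all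
`ℓ × ℓ'` matrices over `F`, as a linear map. -/
noncomputable def evLM (F : Type*) [Field F] (ℓ ℓ' : ℕ) :
    MvPolynomial (Fin ℓ × Fin ℓ') F →ₗ[F] (Matrix (Fin ℓ) (Fin ℓ') F → F) :=
  (aeval (fun x : Fin ℓ × Fin ℓ' => fun P : Matrix (Fin ℓ) (Fin ℓ') F => P x.1 x.2)).toLinearMap

/-- The affine Grassmann code `C^A(ℓ, ℓ+ℓ')`: the image of the span of all minors of
the generic `ℓ × ℓ'` matrix under the evaluation map. -/
noncomputable def affGrassCode (F : Type*) [Field F] (ℓ ℓ' : ℕ) :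
    Submodule F (Matrix (Fin ℓ) (Fin ℓ') F → F) :=
  Submodule.map (evLM F ℓ ℓ') (Submodule.span F (minorSet F ℓ ℓ'))

/-- The Hamming weight of a codeword: the number of nonzero coordinates. -/
noncomputable def wt {F : Type*} [Field F] {ℓ ℓ' : ℕ} (c : Matrix (Fin ℓ) (Fin ℓ') F → F) : ℕ :=
  Nat.card {P : Matrix (Fin ℓ) (Fin ℓ') F // c P ≠ 0}

/-!
An affine map `P ↦ u + P * B` of the evaluation points is induced by the substitution
`X ↦ u + X * B` of the variables, so the code is invariant under it as soon as this substitution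
maps every minor of the generic matrix `X` into the span of the minors. For `X ↦ X * B`,
multilinearity in the columns writes a minor as a combination of minors with arbitrary column
indices, which are signed minors or zero. For `X ↦ u + X`, multilinearity in the rows gives
determinants whose rows are generic or constant, and Laplace expansion along the constant rows
reduces them to minors. The maps with `B` invertible form a copy of `M_{ℓ×ℓ'} ⋊ GL_{ℓ'}` acting
faithfully on the points, whose order is `q^(ℓℓ') |GL_{ℓ'}(F_q)|`.
-/

open scoped Matrix

/-- The space `F(ℓ, m)` of the paper. -/
noncomputable def minorSpan (F : Type*) [Field F] (ℓ ℓ' : ℕ) :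
    Submodule F (MvPolynomial (Fin ℓ × Fin ℓ') F) :=
  Submodule.span F (minorSet F ℓ ℓ')

section Minors

variable {F : Type*} [Field F] {ℓ ℓ' : ℕ}

lemma genMinor_comp_perm {k : ℕ} (r : Fin k → Fin ℓ) (c : Fin k → Fin ℓ')
    (σ τ : Equiv.Perm (Fin k)) :
    genMinor (F := F) ℓ ℓ' k (r ∘ σ) (c ∘ τ)
      = (Equiv.Perm.sign σ * Equiv.Perm.sign τ : ℤ) • genMinor ℓ ℓ' k r c := by
  rw [zsmul_eq_mul, Int.cast_mul, mul_assoc, genMinor, genMinor, ← Matrix.det_permute',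
    ← Matrix.det_permute]
  rfl

lemma genMinor_mem_minorSpan {k : ℕ} (r : Fin k → Fin ℓ) (c : Fin k → Fin ℓ') :
    genMinor ℓ ℓ' k r c ∈ minorSpan F ℓ ℓ' := by
  by_cases hr : r.Injective
  swap
  · obtain ⟨i, i', hrii', hii'⟩ := Function.not_injective_iff.mp hr
    rw [genMinor, Matrix.det_zero_of_row_eq hii' (funext fun j => by simp [hrii'])]
    exact zero_mem _
  by_cases hc : c.Injective
  swap
  · obtain ⟨j, j', hcjj', hjj'⟩ := Function.not_injective_iff.mp hc
    rw [genMinor, Matrix.det_zero_of_column_eq hjj' fun i => by simp [hcjj']]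
    exact zero_mem _
  -- sorting the row and column indices only changes the sign
  set σ := Tuple.sort r
  set τ := Tuple.sort c
  have hsorted : genMinor ℓ ℓ' k (r ∘ σ) (c ∘ τ) ∈ minorSpan F ℓ ℓ' :=
    Submodule.subset_span ⟨k, r ∘ σ, c ∘ τ,
      (Tuple.monotone_sort r).strictMono_of_injective (hr.comp σ.injective),
      (Tuple.monotone_sort c).strictMono_of_injective (hc.comp τ.injective), rfl⟩
  have hback := genMinor_comp_perm (F := F) (r ∘ σ) (c ∘ τ) σ⁻¹ τ⁻¹
  simp only [Function.comp_assoc, ← Equiv.Perm.coe_mul, mul_inv_cancel, Equiv.Perm.coe_one,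
    Function.comp_id] at hback
  rw [hback]
  exact zsmul_mem hsorted _

lemma det_mem_minorSpan_of_rows {k : ℕ} (c : Fin k → Fin ℓ')
    (M : Matrix (Fin k) (Fin k) (MvPolynomial (Fin ℓ × Fin ℓ') F))
    (hM : ∀ i, (∃ a, ∀ j, M i j = X (a, c j)) ∨ ∃ v : Fin k → F, ∀ j, M i j = C (v j)) :
    M.det ∈ minorSpan F ℓ ℓ' := by
  induction k with
  | zero =>
    convert genMinor_mem_minorSpan (F := F) Fin.elim0 c using 1
    simp [genMinor]
  | succ k ih =>
    by_cases hgen : ∀ i, ∃ a, ∀ j, M i j = X (a, c j)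
    · choose r hr using hgen
      rw [show M = Matrix.of fun i j => X (r i, c j) from Matrix.ext hr]
      exact genMinor_mem_minorSpan r c
    obtain ⟨i₀, hi₀⟩ := not_forall.mp hgen
    obtain ⟨v, hv⟩ := (hM i₀).resolve_left hi₀
    -- expanding along the constant row `i₀` leaves scalar multiples of smaller such determinants
    rw [Matrix.det_succ_row M i₀]
    refine Submodule.sum_mem _ fun j _ => ?_
    have hminor := ih (c ∘ j.succAbove) (M.submatrix i₀.succAbove j.succAbove) fun i =>
      (hM (i₀.succAbove i)).imp (fun ⟨a, ha⟩ => ⟨a, fun _ => ha _⟩)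
        (fun ⟨w, hw⟩ => ⟨w ∘ j.succAbove, fun _ => hw _⟩)
    rw [hv j, ← map_one C, ← map_neg, ← map_pow, ← map_mul, ← smul_eq_C_mul]
    exact Submodule.smul_mem _ _ hminor

lemma det_const_add_mem_minorSpan {k : ℕ} (r : Fin k → Fin ℓ) (c : Fin k → Fin ℓ')
    (w : Matrix (Fin k) (Fin k) F) :
    (Matrix.of fun i j => C (w i j) + X (r i, c j)).det ∈ minorSpan F ℓ ℓ' := by
  have hexpand : (Matrix.of fun i j => C (w i j) + X (r i, c j)).det
      = ∑ s : Finset (Fin k), Matrix.detRowAlternating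
          (s.piecewise (fun i j => C (w i j)) fun i j => X (r i, c j)) :=
    MultilinearMap.map_add_univ _ _ _
  rw [hexpand]
  refine Submodule.sum_mem _ fun s _ => det_mem_minorSpan_of_rows c _ fun i => ?_
  by_cases hi : i ∈ s
  · exact Or.inr ⟨w i, fun j => by simp [hi]⟩
  · exact Or.inl ⟨r i, fun j => by simp [hi]⟩

lemma det_mul_const_mem_minorSpan {k : ℕ} (r : Fin k → Fin ℓ) (W : Matrix (Fin ℓ') (Fin k) F) :
    (Matrix.of fun i j => ∑ t, X (r i, t) * C (W t j)).det ∈ minorSpan F ℓ ℓ' := by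
  -- expand the determinant by multilinearity in the columns
  have hexpand : (Matrix.of fun i j => ∑ t, X (r i, t) * C (W t j)).det
      = ∑ f : Fin k → Fin ℓ', (∏ j, W (f j) j) • genMinor ℓ ℓ' k r f := by
    have hcols : (Matrix.of fun i j => ∑ t, X (r i, t) * C (W t j))ᵀ
        = fun j => ∑ t, (C (W t j) : MvPolynomial (Fin ℓ × Fin ℓ') F) • fun i => X (r i, t) := by
      ext j i
      simp [mul_comm]
    rw [← Matrix.det_transpose, hcols]
    refine (Matrix.detRowAlternating.map_sum _).trans (Finset.sum_congr rfl fun f _ => ?_)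
    simp only [MultilinearMap.map_smul_univ, ← map_prod, smul_eq_mul, C_mul']
    rw [genMinor, ← Matrix.det_transpose]
    rfl
  rw [hexpand]
  exact Submodule.sum_mem _ fun f _ => Submodule.smul_mem _ _ (genMinor_mem_minorSpan r f)

lemma evLM_apply (p : MvPolynomial (Fin ℓ × Fin ℓ') F) (P : Matrix (Fin ℓ) (Fin ℓ') F) :
    evLM F ℓ ℓ' p P = aeval (fun x => P x.1 x.2) p := by
  simpa [evLM] using DFunLike.congr_fun (MvPolynomial.comp_aeval
    (f := fun x : Fin ℓ × Fin ℓ' => fun Q : Matrix (Fin ℓ) (Fin ℓ') F => Q x.1 x.2)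
    (Pi.evalAlgHom F (fun _ => F) P)) p

lemma evLM_aeval (g : Fin ℓ × Fin ℓ' → MvPolynomial (Fin ℓ × Fin ℓ') F)
    (p : MvPolynomial (Fin ℓ × Fin ℓ') F) (P : Matrix (Fin ℓ) (Fin ℓ') F) :
    evLM F ℓ ℓ' (aeval g p) P = evLM F ℓ ℓ' p (Matrix.of fun a b => evLM F ℓ ℓ' (g (a, b)) P) := by
  simp only [evLM_apply, aeval_eq_bind₁, aeval_bind₁, Matrix.of_apply]

lemma comp_mem_affGrassCode_of_aeval (g : Fin ℓ × Fin ℓ' → MvPolynomial (Fin ℓ × Fin ℓ') F)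
    (hg : ∀ m ∈ minorSet F ℓ ℓ', aeval g m ∈ minorSpan F ℓ ℓ')
    {c : Matrix (Fin ℓ) (Fin ℓ') F → F} (hc : c ∈ affGrassCode F ℓ ℓ') :
    (fun P => c (Matrix.of fun a b => evLM F ℓ ℓ' (g (a, b)) P)) ∈ affGrassCode F ℓ ℓ' := by
  obtain ⟨p, hp, rfl⟩ := hc
  have hspan : minorSpan F ℓ ℓ' ≤ (minorSpan F ℓ ℓ').comap (aeval g).toLinearMap :=
    Submodule.span_le.mpr hg
  exact ⟨aeval g p, hspan hp, funext (evLM_aeval g p)⟩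

lemma comp_add_left_mem_affGrassCode (u : Matrix (Fin ℓ) (Fin ℓ') F)
    {c : Matrix (Fin ℓ) (Fin ℓ') F → F} (hc : c ∈ affGrassCode F ℓ ℓ') :
    (fun P => c (u + P)) ∈ affGrassCode F ℓ ℓ' := by
  have hg : ∀ m ∈ minorSet F ℓ ℓ', aeval (fun x => C (u x.1 x.2) + X x) m ∈ minorSpan F ℓ ℓ' := by
    rintro _ ⟨k, r, c, -, -, rfl⟩
    rw [genMinor, AlgHom.map_det]
    convert det_const_add_mem_minorSpan r c (Matrix.of fun i j => u (r i) (c j)) using 2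
    ext i j
    simp
  convert comp_mem_affGrassCode_of_aeval _ hg hc using 3
  ext a b
  simp [evLM_apply]

lemma comp_mul_right_mem_affGrassCode (B : Matrix (Fin ℓ') (Fin ℓ') F)
    {c : Matrix (Fin ℓ) (Fin ℓ') F → F} (hc : c ∈ affGrassCode F ℓ ℓ') :
    (fun P => c (P * B)) ∈ affGrassCode F ℓ ℓ' := by
  have hg : ∀ m ∈ minorSet F ℓ ℓ',
      aeval (fun x => ∑ t, X (x.1, t) * C (B t x.2)) m ∈ minorSpan F ℓ ℓ' := by
    rintro _ ⟨k, r, c, -, -, rfl⟩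
    rw [genMinor, AlgHom.map_det]
    convert det_mul_const_mem_minorSpan r (Matrix.of fun t j => B t (c j)) using 2
    ext i j
    simp
  convert comp_mem_affGrassCode_of_aeval _ hg hc using 3
  ext a b
  simp [evLM_apply, Matrix.mul_apply]

end Minors

namespace SemidirectProduct

variable {N G : Type*} [Group N] [Group G] (φ : G →* MulAut N)

def toPerm : N ⋊[φ] G →* Equiv.Perm N :=
  lift (MulAction.toPermHom N N) ((MulAut.toPerm N).comp φ) fun g => by
    ext n x
    change φ g n * x = φ g (n * (φ g).symm x)
    rw [map_mul, MulEquiv.apply_symm_apply]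

lemma toPerm_apply (x : N ⋊[φ] G) (n : N) : toPerm φ x n = x.left * φ x.right n := rfl

lemma toPerm_injective (hφ : Function.Injective φ) : Function.Injective (toPerm φ) := by
  refine (injective_iff_map_eq_one _).mpr fun x hx => ?_
  have hx' (n : N) : x.left * φ x.right n = n := by
    simpa [toPerm_apply] using Equiv.ext_iff.mp hx n
  have hleft : x.left = 1 := by simpa using hx' 1
  have hright : φ x.right = φ 1 := MulEquiv.ext fun n => by simpa [hleft] using hx' n
  exact SemidirectProduct.ext hleft (hφ hright)

end SemidirectProduct

namespace Matrix

lemma ext_of_forall_mul_left_eq {l m n α : Type*} [Fintype m] [DecidableEq m] [NonAssocSemiring α]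
    [Nonempty l] {A B : Matrix m n α} (h : ∀ P : Matrix l m α, P * A = P * B) : A = B :=
  ext_iff_vecMul.mpr fun v => by
    have hrow := congrFun (h (replicateRow l v)) (Classical.arbitrary l)
    rwa [← replicateRow_vecMul, ← replicateRow_vecMul] at hrow

variable {m n R : Type*} [Fintype n] [DecidableEq n]

section Semiring

variable [Semiring R]

variable (m R) in
def mulRightInvAut : GL n R →* MulAut (Multiplicative (Matrix m n R)) where
  toFun A := AddEquiv.toMultiplicative
    { toFun P := P * ((A⁻¹ : GL n R) : Matrix n n R)
      invFun P := P * (A : Matrix n n R)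
      left_inv P := by simp [Matrix.mul_assoc]
      right_inv P := by simp [Matrix.mul_assoc]
      map_add' P Q := Matrix.add_mul P Q _ }
  map_one' := by ext; simp
  map_mul' A B := by ext; simp [Matrix.mul_assoc]

lemma mulRightInvAut_injective [Nonempty m] : Function.Injective (mulRightInvAut (n := n) m R) := by
  intro A B hAB
  have h (P : Matrix m n R) :
      P * ((A⁻¹ : GL n R) : Matrix n n R) = P * ((B⁻¹ : GL n R) : Matrix n n R) :=
    congrArg Multiplicative.toAdd (DFunLike.congr_fun hAB (Multiplicative.ofAdd P))
  exact inv_injective (Units.ext (ext_of_forall_mul_left_eq h))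

end Semiring

variable [Ring R]

variable (m n R) in
def affineAction :
    Multiplicative (Matrix m n R) ⋊[mulRightInvAut m R] GL n R →* Equiv.Perm (Matrix m n R) :=
  Multiplicative.toAdd.permCongrHom.toMonoidHom.comp (SemidirectProduct.toPerm _)

lemma affineAction_apply (x : Multiplicative (Matrix m n R) ⋊[mulRightInvAut m R] GL n R)
    (P : Matrix m n R) :
    affineAction m n R x P = x.left.toAdd + P * ((x.right⁻¹ : GL n R) : Matrix n n R) := rfl

lemma affineAction_injective [Nonempty m] : Function.Injective (affineAction m n R) :=
  (MulEquiv.injective Multiplicative.toAdd.permCongrHom).comp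
    (SemidirectProduct.toPerm_injective _ mulRightInvAut_injective)

end Matrix

theorem affGrassCode_aut_subgroup_general (F : Type*) [Field F] [Fintype F] (q ℓ ℓ' : ℕ)
    (hq : Fintype.card F = q) (hℓ : 1 ≤ ℓ) :
    ∃ H : Subgroup (Equiv.Perm (Matrix (Fin ℓ) (Fin ℓ') F)),
      (∀ σ ∈ H, ∀ c ∈ affGrassCode F ℓ ℓ', (fun P => c (σ P)) ∈ affGrassCode F ℓ ℓ')
        ∧ Nat.card H = q ^ (ℓ * ℓ') * ∏ i ∈ Finset.range ℓ', (q ^ ℓ' - q ^ i)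
        ∧ ∃ θ : GL (Fin ℓ') F →* MulAut (Multiplicative (Matrix (Fin ℓ) (Fin ℓ') F)),
            Nonempty
              ((Multiplicative (Matrix (Fin ℓ) (Fin ℓ') F) ⋊[θ] GL (Fin ℓ') F) ≃* H) := by
  subst hq
  have : Nonempty (Fin ℓ) := Fin.pos_iff_nonempty.mp hℓ
  have hinj := Matrix.affineAction_injective (m := Fin ℓ) (n := Fin ℓ') (R := F)
  refine ⟨(Matrix.affineAction _ _ _).range, ?_, ?_, _, ⟨MonoidHom.ofInjective hinj⟩⟩
  · rintro _ ⟨x, rfl⟩ c hc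
    simp only [Matrix.affineAction_apply]
    exact comp_mul_right_mem_affGrassCode _ (comp_add_left_mem_affGrassCode _ hc)
  · rw [← Nat.card_congr (MonoidHom.ofInjective hinj).toEquiv, SemidirectProduct.card,
      Matrix.card_GL_field, ← Fin.prod_univ_eq_prod_range]
    congr 1
    simp [Nat.card_eq_fintype_card, Matrix, pow_mul']

/-- The (permutation) automorphism group of the affine Grassmann code contains a
subgroup of order `q^(ℓℓ') ∏_{i=0}^{ℓ'-1}(q^{ℓ'} - q^i)`, isomorphic to the
semidirect product `M_{ℓ×ℓ'}(F_q) ⋊ GL_{ℓ'}(F_q)`. -/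
theorem affGrassCode_aut_subgroup (F : Type*) [Field F] [Fintype F] (q ℓ ℓ' : ℕ)
    (hq : Fintype.card F = q) (hℓ : 1 ≤ ℓ) (hℓℓ' : ℓ ≤ ℓ') :
    ∃ H : Subgroup (Equiv.Perm (Matrix (Fin ℓ) (Fin ℓ') F)),
      (∀ σ ∈ H, ∀ c ∈ affGrassCode F ℓ ℓ', (fun P => c (σ P)) ∈ affGrassCode F ℓ ℓ')
        ∧ Nat.card H = q ^ (ℓ * ℓ') * ∏ i ∈ Finset.range ℓ', (q ^ ℓ' - q ^ i)
        ∧ ∃ θ : GL (Fin ℓ') F →* MulAut (Multiplicative (Matrix (Fin ℓ) (Fin ℓ') F)),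
            Nonempty
              ((Multiplicative (Matrix (Fin ℓ) (Fin ℓ') F) ⋊[θ] GL (Fin ℓ') F) ≃* H) :=
  affGrassCode_aut_subgroup_general F q ℓ ℓ' hq hℓ
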